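/- (Claim (a) in the proof of the unimodality theorem.) Let α > 0, β > 0 and λ > 0. If y_BS > 0 is a critical point of the BS(α,β) density f_T, equivalently a''(y_BS;α,β) = a(y_BS;α,β) (a'(y_BS;α,β))², then the derivative of the skew-BS density at y_BS is strictly positive: f'(y_BS;α,β,λ) = 2λ a'(y_BS;α,β) φ(λ a(y_BS;α,β)) f_T(y_BS;α,β) > 0. -/

import Mathlib

open Real MeasureTheory Set

/-- Standard normal PDF. -/
noncomputable def stdPhi (x : ℝ) : ℝ := (Real.sqrt (2 * Real.pi))⁻¹ * Real.exp (-x ^ 2 / 2)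

/-- Standard normal CDF. -/
noncomputable def stdPhiCDF (x : ℝ) : ℝ := ∫ t in Set.Iic x, stdPhi t

/-- The function a(y; α, β). -/
noncomputable def aBS (α β y : ℝ) : ℝ := (1 / α) * (Real.sqrt (y / β) - Real.sqrt (β / y))

/-- The first derivative a'(y; α, β). -/
noncomputable def aBS' (α β y : ℝ) : ℝ :=
  (1 / (2 * α * y)) * (Real.sqrt (y / β) + Real.sqrt (β / y))

/-- The second derivative a''(y; α, β). -/
noncomputable def aBS'' (α β y : ℝ) : ℝ :=
  -(1 / (4 * α * y ^ 2)) * (Real.sqrt (y / β) + 3 * Real.sqrt (β / y))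

/-- The skew-BS(α, β, λ) density. -/
noncomputable def skewBSpdf (α β lam y : ℝ) : ℝ :=
  2 * stdPhi (aBS α β y) * stdPhiCDF (lam * aBS α β y) * aBS' α β y

/-- The BS(α, β) density. -/
noncomputable def bsPdf (α β y : ℝ) : ℝ := stdPhi (aBS α β y) * aBS' α β y

/-! Since f = 2 f_T · Φ(λ a), the product rule gives f' = 2 f_T' Φ(λ a) + 2 f_T φ(λ a) λ a'.
At a critical point of f_T the first term vanishes, and the second is a product of positive
factors. -/

open ProbabilityTheory

lemma stdPhi_eq_gaussianPDFReal : stdPhi = gaussianPDFReal 0 1 := by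
  ext x
  simp [stdPhi, gaussianPDFReal]

lemma stdPhi_pos (x : ℝ) : 0 < stdPhi x :=
  stdPhi_eq_gaussianPDFReal ▸ gaussianPDFReal_pos 0 1 x one_ne_zero

lemma integrable_stdPhi : Integrable stdPhi :=
  stdPhi_eq_gaussianPDFReal ▸ integrable_gaussianPDFReal 0 1

lemma continuous_stdPhi : Continuous stdPhi := by
  unfold stdPhi; fun_prop

lemma hasDerivAt_stdPhi (x : ℝ) : HasDerivAt stdPhi (-x * stdPhi x) x := by
  have h : HasDerivAt (fun t : ℝ => -t ^ 2 / 2) (-x) x :=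
    ((hasDerivAt_pow 2 x).fun_neg.div_const 2).congr_deriv (by norm_num; ring)
  exact (h.exp.const_mul _).congr_deriv (by unfold stdPhi; ring)

lemma hasDerivAt_integral_Iic {E : Type*} [NormedAddCommGroup E] [NormedSpace ℝ E]
    [CompleteSpace E] {f : ℝ → E} {x : ℝ} (hf : Integrable f) (hc : ContinuousAt f x) :
    HasDerivAt (fun u => ∫ t in Iic u, f t) (f x) x := by
  have hsplit : (fun u => ∫ t in Iic u, f t)
      = fun u => (∫ t in Iic (0 : ℝ), f t) + ∫ t in (0 : ℝ)..u, f t := by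
    funext u
    rw [← intervalIntegral.integral_Iic_sub_Iic hf.integrableOn hf.integrableOn]
    abel
  rw [hsplit]
  exact (intervalIntegral.integral_hasDerivAt_right hf.intervalIntegrable
    hf.aestronglyMeasurable.stronglyMeasurableAtFilter hc).const_add _

lemma hasDerivAt_stdPhiCDF (x : ℝ) : HasDerivAt stdPhiCDF (stdPhi x) x :=
  hasDerivAt_integral_Iic integrable_stdPhi continuous_stdPhi.continuousAt

section BirnbaumSaunders

variable {α β y : ℝ}

-- With s = √(y/β) one has √(β/y) = s⁻¹ and s' = s/(2y), so a, a', a'' are rational in s.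
lemma sqrt_div_swap (β y : ℝ) : √(β / y) = (√(y / β))⁻¹ := by
  rw [← Real.sqrt_inv, inv_div]

lemma aBS_eq (α β : ℝ) : aBS α β = fun z => α⁻¹ * (√(z / β) - (√(z / β))⁻¹) := by
  ext z; simp [aBS, sqrt_div_swap β z]

lemma aBS'_eq (α β : ℝ) :
    aBS' α β = fun z => (2 * α)⁻¹ * (z⁻¹ * (√(z / β) + (√(z / β))⁻¹)) := by
  ext z; simp only [aBS', sqrt_div_swap β z]; ring

lemma hasDerivAt_sqrt_div (hβ : 0 < β) (hy : 0 < y) :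
    HasDerivAt (fun z => √(z / β)) (√(y / β) / (2 * y)) y := by
  have hsq : √(y / β) ^ 2 = y / β := Real.sq_sqrt (div_pos hy hβ).le
  refine (((hasDerivAt_id y).div_const β).sqrt (div_pos hy hβ).ne').congr_deriv ?_
  simp only [id]
  field_simp
  rw [hsq]
  field_simp

lemma hasDerivAt_aBS (hβ : 0 < β) (hy : 0 < y) : HasDerivAt (aBS α β) (aBS' α β y) y := by
  have hs : √(y / β) ≠ 0 := (Real.sqrt_pos.2 (div_pos hy hβ)).ne'
  have hd := hasDerivAt_sqrt_div hβ hy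
  rw [aBS_eq]
  refine ((hd.sub (hd.inv hs)).const_mul α⁻¹).congr_deriv ?_
  rw [aBS'_eq]
  field_simp
  ring

lemma hasDerivAt_aBS' (hβ : 0 < β) (hy : 0 < y) : HasDerivAt (aBS' α β) (aBS'' α β y) y := by
  have hs : √(y / β) ≠ 0 := (Real.sqrt_pos.2 (div_pos hy hβ)).ne'
  have hd := hasDerivAt_sqrt_div hβ hy
  rw [aBS'_eq]
  refine (((hasDerivAt_inv hy.ne').mul (hd.add (hd.inv hs))).const_mul (2 * α)⁻¹).congr_deriv ?_
  simp only [aBS'', sqrt_div_swap β y, Pi.add_apply, Pi.inv_apply]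
  field_simp
  ring

lemma aBS'_pos (hα : 0 < α) (hβ : 0 < β) (hy : 0 < y) : 0 < aBS' α β y := by
  have : 0 < √(y / β) := Real.sqrt_pos.2 (div_pos hy hβ)
  unfold aBS'
  positivity

lemma bsPdf_pos (hα : 0 < α) (hβ : 0 < β) (hy : 0 < y) : 0 < bsPdf α β y :=
  mul_pos (stdPhi_pos _) (aBS'_pos hα hβ hy)

lemma hasDerivAt_bsPdf (hβ : 0 < β) (hy : 0 < y) :
    HasDerivAt (bsPdf α β)
      (stdPhi (aBS α β y) * (aBS'' α β y - aBS α β y * aBS' α β y ^ 2)) y := by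
  refine (((hasDerivAt_stdPhi _).comp y (hasDerivAt_aBS hβ hy)).mul
    (hasDerivAt_aBS' hβ hy)).congr_deriv ?_
  simp only [Function.comp_apply]
  ring

lemma skewBSpdf_eq (α β lam : ℝ) :
    skewBSpdf α β lam = fun z => 2 * bsPdf α β z * stdPhiCDF (lam * aBS α β z) := by
  ext z; simp only [skewBSpdf, bsPdf]; ring

lemma hasDerivAt_skewBSpdf (lam : ℝ) (hβ : 0 < β) (hy : 0 < y) :
    HasDerivAt (skewBSpdf α β lam)
      (2 * (stdPhi (aBS α β y) * (aBS'' α β y - aBS α β y * aBS' α β y ^ 2))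
          * stdPhiCDF (lam * aBS α β y)
        + 2 * bsPdf α β y * (stdPhi (lam * aBS α β y) * (lam * aBS' α β y))) y := by
  rw [skewBSpdf_eq]
  exact ((hasDerivAt_bsPdf hβ hy).const_mul 2).mul
    ((hasDerivAt_stdPhiCDF _).comp y ((hasDerivAt_aBS hβ hy).const_mul lam))

end BirnbaumSaunders

/-- claim (a) in the unimodality proof: if λ > 0 and y_BS > 0 is a
critical point of the BS density (a''(y_BS) = a(y_BS) a'(y_BS)²), then the derivative
of the skew-BS density at y_BS equals 2λ a'(y_BS) φ(λ a(y_BS)) f_T(y_BS) and is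
strictly positive. -/
theorem skewBS_deriv_pos_at_BS_mode (α β lam yBS : ℝ) (hα : 0 < α) (hβ : 0 < β)
    (hlam : 0 < lam) (hyBS : 0 < yBS)
    (hcrit : aBS'' α β yBS = aBS α β yBS * (aBS' α β yBS) ^ 2) :
    deriv (fun z => skewBSpdf α β lam z) yBS
        = 2 * lam * aBS' α β yBS * stdPhi (lam * aBS α β yBS) * bsPdf α β yBS ∧
      0 < deriv (fun z => skewBSpdf α β lam z) yBS := by
  have hderiv : deriv (fun z => skewBSpdf α β lam z) yBS
      = 2 * lam * aBS' α β yBS * stdPhi (lam * aBS α β yBS) * bsPdf α β yBS := by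
    rw [(hasDerivAt_skewBSpdf lam hβ hyBS).deriv, hcrit]
    ring
  refine ⟨hderiv, hderiv ▸ ?_⟩
  have := aBS'_pos hα hβ hyBS
  have := stdPhi_pos (lam * aBS α β yBS)
  have := bsPdf_pos hα hβ hyBS
  positivity
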